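/- arXiv:2305.06816 — 6 statements merged into one kernel-verified Lean document; each statement's English description precedes it below -/
import Mathlib

section
/- Let P1 be a probability measure on a measurable space 𝔜, let q: 𝔜 → ℝ be measurable with 0 < ∫ e^q dP1 < ∞, let p ∈ (0,1), let P0 be the probability measure with dP0 = e^q dP1 / ∫ e^q dP1, let P = (1−p)·P0 + p·P1, and define η ∈ ℝ by e^η = ((1−p)/p)/∫ e^q dP1. Then for every measurable set A ⊆ 𝔜, (1−p)·P0(A) = ∫_A e^{η+q(y)}/(1 + e^{η+q(y)}) dP(y). (Equivalently: the conditional probability of non-observation given outcome y is the logistic function of η + q(y), i.e. logit Pr(R=0 | Y=y) = η + q(y).) -/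
open MeasureTheory Real ENNReal

/-!
Write `M` for the measure with density `e^{η+q}` with respect to `P1`. The choice of `η` makes
`(1-p)·P0 = p·M`, hence `P = p·(M + P1)`. Since `σ(x)(1 + eˣ) = eˣ` for the sigmoid `σ`, the
measure `M` has density `σ(η+q)` with respect to `M + P1`, so `(1-p)·P0` has density `σ(η+q)`
with respect to `P`; evaluating at `A` gives the claim, as `P0` is finite.
-/

namespace Real

lemma exp_div_one_add_exp (x : ℝ) : exp x / (1 + exp x) = sigmoid x := by
  rw [sigmoid_def, exp_neg]
  field_simp
  ring

lemma sigmoid_mul_one_add_exp (x : ℝ) : sigmoid x * (1 + exp x) = exp x := by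
  rw [← exp_div_one_add_exp]
  field_simp

lemma measurable_sigmoid : Measurable sigmoid := continuous_sigmoid.measurable

end Real

namespace MeasureTheory

variable {α : Type*} [MeasurableSpace α]

lemma ofReal_smul_withDensity_ofReal (μ : Measure α) {a : ℝ} (ha : 0 ≤ a) (f : α → ℝ) :
    ENNReal.ofReal a • μ.withDensity (fun x => ENNReal.ofReal (f x)) =
      μ.withDensity (fun x => ENNReal.ofReal (a * f x)) := by
  rw [← withDensity_smul' _ _ ofReal_ne_top]
  congr 1
  funext x
  simp [ENNReal.ofReal_mul ha]

lemma withDensity_add_withDensity_sigmoid (ν : Measure α) {u : α → ℝ} (hu : Measurable u) :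
    (ν.withDensity (fun x => ENNReal.ofReal (exp (u x))) + ν).withDensity
        (fun x => ENNReal.ofReal (sigmoid (u x))) =
      ν.withDensity (fun x => ENNReal.ofReal (exp (u x))) := by
  have hexp : Measurable fun x => ENNReal.ofReal (exp (u x)) := hu.exp.ennreal_ofReal
  have hsig : Measurable fun x => ENNReal.ofReal (sigmoid (u x)) :=
    (measurable_sigmoid.comp hu).ennreal_ofReal
  rw [withDensity_add_measure, ← withDensity_mul _ hexp hsig,
    ← withDensity_add_left (hexp.mul hsig)]
  congr 1
  funext x
  simp only [Pi.add_apply, Pi.mul_apply]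
  rw [← ENNReal.ofReal_mul (exp_pos _).le,
    ← ENNReal.ofReal_add (mul_nonneg (exp_pos _).le (sigmoid_nonneg _)) (sigmoid_nonneg _)]
  congr 1
  linear_combination sigmoid_mul_one_add_exp (u x)

lemma ofReal_setIntegral_eq_withDensity_apply {μ : Measure α} {f : α → ℝ} {s : Set α}
    (hs : MeasurableSet s) (hf : 0 ≤ᵐ[μ.restrict s] f)
    (hfm : AEStronglyMeasurable f (μ.restrict s))
    (hfin : μ.withDensity (fun x => ENNReal.ofReal (f x)) s ≠ ∞) :
    ENNReal.ofReal (∫ x in s, f x ∂μ) = μ.withDensity (fun x => ENNReal.ofReal (f x)) s := by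
  rw [withDensity_apply _ hs] at hfin ⊢
  rw [integral_eq_lintegral_of_nonneg_ae hf hfm, ofReal_toReal hfin]

end MeasureTheory

theorem selection_bias_logistic_representation_general
    {𝔜 : Type*} [MeasurableSpace 𝔜]
    (P1 : Measure 𝔜)
    (q : 𝔜 → ℝ) (hq : Measurable q)
    (hint : Integrable (fun y => Real.exp (q y)) P1)
    (p : ℝ) (hp : p ∈ Set.Ioo (0 : ℝ) 1)
    (P0 : Measure 𝔜)
    (hP0 : P0 = P1.withDensity
      (fun y => ENNReal.ofReal (Real.exp (q y) / ∫ z, Real.exp (q z) ∂P1)))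
    (P : Measure 𝔜)
    (hP : P = ENNReal.ofReal (1 - p) • P0 + ENNReal.ofReal p • P1)
    (η : ℝ)
    (hη : Real.exp η = ((1 - p) / p) / ∫ z, Real.exp (q z) ∂P1) :
    ∀ A : Set 𝔜, MeasurableSet A →
      ENNReal.ofReal (1 - p) * P0 A =
        ENNReal.ofReal
          (∫ y in A, Real.exp (η + q y) / (1 + Real.exp (η + q y)) ∂P) := by
  intro A hA
  obtain ⟨hp0, hp1⟩ := hp
  have hu : Measurable fun y => η + q y := measurable_const.add hq
  set M := P1.withDensity fun y => ENNReal.ofReal (exp (η + q y))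
  have hodds : ∀ y, (1 - p) * (exp (q y) / ∫ z, exp (q z) ∂P1) = p * exp (η + q y) := by
    intro y
    rw [exp_add, hη]
    field_simp
  have hP0M : ENNReal.ofReal (1 - p) • P0 = ENNReal.ofReal p • M := by
    rw [hP0, ofReal_smul_withDensity_ofReal _ (by linarith),
      ofReal_smul_withDensity_ofReal _ hp0.le]
    simp_rw [hodds]
  have hP0P : ENNReal.ofReal (1 - p) • P0 =
      P.withDensity fun y => ENNReal.ofReal (sigmoid (η + q y)) := by
    rw [hP, hP0M, ← smul_add, withDensity_smul_measure,
      withDensity_add_withDensity_sigmoid _ hu]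
  have hP0fin : IsFiniteMeasure P0 := hP0 ▸ isFiniteMeasure_withDensity_ofReal
    (hint.div_const _).hasFiniteIntegral
  have hfin : (P.withDensity fun y => ENNReal.ofReal (sigmoid (η + q y))) A ≠ ∞ := by
    rw [← hP0P, Measure.smul_apply, smul_eq_mul]
    exact ENNReal.mul_ne_top ofReal_ne_top (measure_ne_top P0 A)
  simp_rw [exp_div_one_add_exp]
  rw [ofReal_setIntegral_eq_withDensity_apply hA (.of_forall fun _ => sigmoid_nonneg _)
    (measurable_sigmoid.comp hu).aestronglyMeasurable hfin, ← hP0P, Measure.smul_apply,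
    smul_eq_mul]

/-- With `P0` the tilted version of `P1`, `P = (1-p)·P0 + p·P1` and
`e^η = ((1-p)/p)/∫ e^q dP1`, we have
`(1-p)·P0(A) = ∫_A e^{η+q}/(1+e^{η+q}) dP` for every measurable `A`,
i.e. `logit Pr(R=0 | Y=y) = η + q(y)`. -/
theorem selection_bias_logistic_representation
    {𝔜 : Type*} [MeasurableSpace 𝔜]
    (P1 : Measure 𝔜) [IsProbabilityMeasure P1]
    (q : 𝔜 → ℝ) (hq : Measurable q)
    (hint : Integrable (fun y => Real.exp (q y)) P1)
    (hpos : 0 < ∫ y, Real.exp (q y) ∂P1)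
    (p : ℝ) (hp : p ∈ Set.Ioo (0 : ℝ) 1)
    (P0 : Measure 𝔜)
    (hP0 : P0 = P1.withDensity
      (fun y => ENNReal.ofReal (Real.exp (q y) / ∫ z, Real.exp (q z) ∂P1)))
    (P : Measure 𝔜)
    (hP : P = ENNReal.ofReal (1 - p) • P0 + ENNReal.ofReal p • P1)
    (η : ℝ)
    (hη : Real.exp η = ((1 - p) / p) / ∫ z, Real.exp (q z) ∂P1) :
    ∀ A : Set 𝔜, MeasurableSet A →
      ENNReal.ofReal (1 - p) * P0 A =
        ENNReal.ofReal
          (∫ y in A, Real.exp (η + q y) / (1 + Real.exp (η + q y)) ∂P) :=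
  selection_bias_logistic_representation_general P1 q hq hint p hp P0 hP0 P hP η hη
end

section
/- Let P1 be a probability measure on a measurable space 𝔜, let q: 𝔜 → ℝ be measurable with 0 < ∫ e^q dP1 < ∞, let p ∈ (0,1), let P0 be the probability measure with dP0 = e^q dP1 / ∫ e^q dP1, let P = (1−p)·P0 + p·P1, and define η ∈ ℝ by e^η = ((1−p)/p)/∫ e^q dP1. Then p = ∫ 1/(1 + e^{η+q(y)}) dP(y), and for every measurable set A ⊆ 𝔜, P1(A) = (1/p) · ∫_A 1/(1 + e^{η+q(y)}) dP(y). -/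
open MeasureTheory Real

/-! With `c = ∫ e^q dP1`, `P0` has density `f = e^q / c` with respect to `P1`, and the choice of `η`
says exactly `(1 - p) f = p e^{η + q}`. Hence for `g = 1 / (1 + e^{η + q})` we have
`((1 - p) f + p) g = p` pointwise, i.e. `g • P = p • P1` as measures; evaluating this measure
identity on `𝔜` and on `A` gives both claims. -/

section mixture

variable {α : Type*} [MeasurableSpace α]

lemma setIntegral_eq_withDensity_ofReal_real {μ : Measure α} {g : α → ℝ} (hg : Measurable g)
    (hg_nonneg : ∀ x, 0 ≤ g x) {s : Set α} (hs : MeasurableSet s) :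
    ∫ x in s, g x ∂μ = (μ.withDensity fun x => ENNReal.ofReal (g x)).real s := by
  rw [integral_eq_lintegral_of_nonneg_ae (.of_forall hg_nonneg) hg.aestronglyMeasurable,
    measureReal_def, withDensity_apply _ hs]

lemma withDensity_mixture_eq_smul {μ : Measure α} {f g : α → ENNReal} (hf : Measurable f)
    (hg : Measurable g) {a b : ENNReal} (h : ∀ x, a * f x * g x + b * g x = b) :
    (a • μ.withDensity f + b • μ).withDensity g = b • μ := by
  rw [withDensity_add_measure, withDensity_smul_measure, withDensity_smul_measure,
    ← withDensity_mul μ hf hg, ← withDensity_smul _ (hf.mul hg), ← withDensity_smul _ hg,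
    ← withDensity_add_left ((hf.mul hg).const_smul a), ← withDensity_const]
  exact congrArg μ.withDensity (funext fun x => by simpa [mul_assoc] using h x)

end mixture

lemma one_sub_mul_mul_logistic_add_mul_logistic {p c η t : ℝ} (hp : p ≠ 0)
    (hη : exp η = (1 - p) / p / c) :
    (1 - p) * (exp t / c) * (1 / (1 + exp (η + t))) + p * (1 / (1 + exp (η + t))) = p := by
  have hodds : (1 - p) * (exp t / c) = p * exp (η + t) := by
    rw [exp_add, hη]; field_simp
  have hden : 1 + exp (η + t) ≠ 0 := by positivity
  rw [hodds]
  field_simp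
  ring

theorem observed_distribution_representation_general
    {𝔜 : Type*} [MeasurableSpace 𝔜]
    (P1 : Measure 𝔜) [IsProbabilityMeasure P1]
    (q : 𝔜 → ℝ) (hq : Measurable q)
    (p : ℝ) (hp : p ∈ Set.Ioo (0 : ℝ) 1)
    (P0 : Measure 𝔜)
    (hP0 : P0 = P1.withDensity
      (fun y => ENNReal.ofReal (Real.exp (q y) / ∫ z, Real.exp (q z) ∂P1)))
    (P : Measure 𝔜)
    (hP : P = ENNReal.ofReal (1 - p) • P0 + ENNReal.ofReal p • P1)
    (η : ℝ)
    (hη : Real.exp η = ((1 - p) / p) / ∫ z, Real.exp (q z) ∂P1) :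
    p = ∫ y, 1 / (1 + Real.exp (η + q y)) ∂P ∧
    ∀ A : Set 𝔜, MeasurableSet A →
      P1 A = ENNReal.ofReal
        ((1 / p) * ∫ y in A, 1 / (1 + Real.exp (η + q y)) ∂P) := by
  obtain ⟨hp0, hp1⟩ := hp
  set c := ∫ z, exp (q z) ∂P1
  have hc : 0 ≤ c := integral_nonneg fun _ => (exp_pos _).le
  have hg : Measurable fun y => 1 / (1 + exp (η + q y)) := by fun_prop
  have hP_tilt : (P.withDensity fun y => ENNReal.ofReal (1 / (1 + exp (η + q y))))
      = ENNReal.ofReal p • P1 := by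
    rw [hP, hP0]
    refine withDensity_mixture_eq_smul (by fun_prop) hg.ennreal_ofReal fun y => ?_
    rw [← ENNReal.ofReal_mul (by linarith), ← ENNReal.ofReal_mul (by positivity),
      ← ENNReal.ofReal_mul hp0.le, ← ENNReal.ofReal_add (by positivity) (by positivity),
      one_sub_mul_mul_logistic_add_mul_logistic hp0.ne' hη]
  have hweight : ∀ A, MeasurableSet A →
      ∫ y in A, 1 / (1 + exp (η + q y)) ∂P = p * P1.real A := by
    intro A hA
    rw [setIntegral_eq_withDensity_ofReal_real hg (fun y => by positivity) hA, hP_tilt,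
      measureReal_ennreal_smul_apply, ENNReal.toReal_ofReal hp0.le]
  refine ⟨?_, fun A hA => ?_⟩
  · simpa using (hweight Set.univ .univ).symm
  · rw [hweight A hA, one_div, inv_mul_cancel_left₀ hp0.ne', ofReal_measureReal]

/-- With `P0` the tilted version of `P1`, `P = (1-p)·P0 + p·P1` and
`e^η = ((1-p)/p)/∫ e^q dP1`, we have `p = ∫ 1/(1+e^{η+q}) dP` and
`P1(A) = (1/p) ∫_A 1/(1+e^{η+q}) dP` for every measurable `A`. -/
theorem observed_distribution_representation
    {𝔜 : Type*} [MeasurableSpace 𝔜]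
    (P1 : Measure 𝔜) [IsProbabilityMeasure P1]
    (q : 𝔜 → ℝ) (hq : Measurable q)
    (hint : Integrable (fun y => Real.exp (q y)) P1)
    (hpos : 0 < ∫ y, Real.exp (q y) ∂P1)
    (p : ℝ) (hp : p ∈ Set.Ioo (0 : ℝ) 1)
    (P0 : Measure 𝔜)
    (hP0 : P0 = P1.withDensity
      (fun y => ENNReal.ofReal (Real.exp (q y) / ∫ z, Real.exp (q z) ∂P1)))
    (P : Measure 𝔜)
    (hP : P = ENNReal.ofReal (1 - p) • P0 + ENNReal.ofReal p • P1)
    (η : ℝ)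
    (hη : Real.exp η = ((1 - p) / p) / ∫ z, Real.exp (q z) ∂P1) :
    p = ∫ y, 1 / (1 + Real.exp (η + q y)) ∂P ∧
    ∀ A : Set 𝔜, MeasurableSet A →
      P1 A = ENNReal.ofReal
        ((1 / p) * ∫ y in A, 1 / (1 + Real.exp (η + q y)) ∂P) :=
  observed_distribution_representation_general P1 q hq p hp P0 hP0 P hP η hη
end

section
/- Let P1 be a probability measure on a measurable space 𝔜, let q: 𝔜 → ℝ be measurable with 0 < ∫ e^q dP1 < ∞, let p ∈ (0,1), let P0 be the probability measure with dP0 = e^q dP1 / ∫ e^q dP1, let P = (1−p)·P0 + p·P1, and define η ∈ ℝ by e^η = ((1−p)/p)/∫ e^q dP1. Then for every measurable set A ⊆ 𝔜, P0(A) = (∫_A e^{q(y)}/(1 + e^{η+q(y)}) dP(y)) / (∫ e^{q(y)}/(1 + e^{η+q(y)}) dP(y)). -/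
open MeasureTheory Real
open scoped ENNReal NNReal

/-- With `P0` the tilted version of `P1`, `P = (1-p)·P0 + p·P1` and
`e^η = ((1-p)/p)/∫ e^q dP1`, we have
`P0(A) = (∫_A e^q/(1+e^{η+q}) dP) / (∫ e^q/(1+e^{η+q}) dP)` for every measurable `A`. -/
theorem missing_distribution_representation
    {𝔜 : Type*} [MeasurableSpace 𝔜]
    (P1 : Measure 𝔜) [IsProbabilityMeasure P1]
    (q : 𝔜 → ℝ) (hq : Measurable q)
    (hint : Integrable (fun y => Real.exp (q y)) P1)
    (hpos : 0 < ∫ y, Real.exp (q y) ∂P1)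
    (p : ℝ) (hp : p ∈ Set.Ioo (0 : ℝ) 1)
    (P0 : Measure 𝔜)
    (hP0 : P0 = P1.withDensity
      (fun y => ENNReal.ofReal (Real.exp (q y) / ∫ z, Real.exp (q z) ∂P1)))
    (P : Measure 𝔜)
    (hP : P = ENNReal.ofReal (1 - p) • P0 + ENNReal.ofReal p • P1)
    (η : ℝ)
    (hη : Real.exp η = ((1 - p) / p) / ∫ z, Real.exp (q z) ∂P1) :
    ∀ A : Set 𝔜, MeasurableSet A →
      P0 A = ENNReal.ofReal
        ((∫ y in A, Real.exp (q y) / (1 + Real.exp (η + q y)) ∂P) /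
          (∫ y, Real.exp (q y) / (1 + Real.exp (η + q y)) ∂P)) := by
  intro A hA
  set c : ℝ := ∫ z, Real.exp (q z) ∂P1 with hc_def
  set f : 𝔜 → ℝ := fun y => Real.exp (q y) / (1 + Real.exp (η + q y)) with hf_def
  have hp0 : 0 < p := hp.1
  have hp1 : p < 1 := hp.2
  have hpne : p ≠ 0 := hp0.ne'
  have hc : 0 < c := hpos
  have hcne : c ≠ 0 := hc.ne'
  have hE : ∀ y, 0 < 1 + Real.exp (η + q y) := fun y => by positivity
  have hf_nonneg : ∀ y, 0 ≤ f y := fun y => by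
    exact div_nonneg (Real.exp_nonneg _) (hE y).le
  have hf_le : ∀ y, f y ≤ Real.exp (-η) := by
    intro y
    have h1 : Real.exp (q y) / (1 + Real.exp (η + q y))
        ≤ Real.exp (q y) / Real.exp (η + q y) := by
      apply div_le_div_of_nonneg_left (Real.exp_nonneg _) (Real.exp_pos _)
      linarith [Real.exp_pos (η + q y)]
    calc f y ≤ Real.exp (q y) / Real.exp (η + q y) := h1
      _ = Real.exp (-η) := by rw [← Real.exp_sub]; ring_nf
  have hf_meas : Measurable f := by
    apply Measurable.div hq.exp
    exact (measurable_const.add ((measurable_const.add hq).exp))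
  have hf_int : ∀ (μ : Measure 𝔜) [IsFiniteMeasure μ], Integrable f μ := by
    intro μ _
    refine (integrable_const (Real.exp (-η))).mono' hf_meas.aestronglyMeasurable ?_
    filter_upwards with y
    rw [Real.norm_eq_abs, abs_of_nonneg (hf_nonneg y)]
    exact hf_le y
  -- P0 is a probability measure
  have hd_nonneg : ∀ y, 0 ≤ Real.exp (q y) / c := fun y =>
    div_nonneg (Real.exp_nonneg _) hc.le
  have hP0A : ∀ B : Set 𝔜, MeasurableSet B →
      P0 B = ENNReal.ofReal ((∫ y in B, Real.exp (q y) ∂P1) / c) := by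
    intro B hB
    rw [hP0, withDensity_apply _ hB,
      ← ofReal_integral_eq_lintegral_ofReal ((hint.div_const c).restrict)
        (Filter.Eventually.of_forall hd_nonneg)]
    rw [integral_div]
  have hP0fin : IsFiniteMeasure P0 := by
    constructor
    rw [hP0A Set.univ MeasurableSet.univ]
    exact ENNReal.ofReal_lt_top
  -- key pointwise identity
  have hpoint : ∀ y, (1 - p) * (Real.exp (q y) / c * f y)
      = p * Real.exp (q y) - p * f y := by
    intro y
    have h1 : (1 - p) = p * Real.exp η * c := by
      rw [hη]; field_simp
    have hEy := hE y
    simp only [hf_def]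
    rw [Real.exp_add] at hEy ⊢
    rw [h1]
    field_simp
    ring
  -- key integral identity
  have key : ∀ B : Set 𝔜, MeasurableSet B →
      ∫ y in B, f y ∂P = p * ∫ y in B, Real.exp (q y) ∂P1 := by
    intro B hB
    have h1 : ∫ y in B, f y ∂P
        = (1 - p) * ∫ y in B, f y ∂P0 + p * ∫ y in B, f y ∂P1 := by
      rw [hP, Measure.restrict_add, Measure.restrict_smul, Measure.restrict_smul,
        integral_add_measure
          ((hf_int P0).restrict.smul_measure ENNReal.ofReal_ne_top)
          ((hf_int P1).restrict.smul_measure ENNReal.ofReal_ne_top),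
        integral_smul_measure, integral_smul_measure,
        ENNReal.toReal_ofReal (by linarith), ENNReal.toReal_ofReal hp0.le]
      simp [smul_eq_mul]
    have h2 : ∫ y in B, f y ∂P0 = ∫ y in B, Real.exp (q y) / c * f y ∂P1 := by
      rw [hP0, restrict_withDensity hB]
      have hmeas : Measurable fun y => (Real.exp (q y) / c).toNNReal :=
        (hq.exp.div_const c).real_toNNReal
      have : (P1.restrict B).withDensity
            (fun y => ENNReal.ofReal (Real.exp (q y) / c))
          = (P1.restrict B).withDensity
            (fun y => ((Real.exp (q y) / c).toNNReal : ℝ≥0∞)) := rfl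
      rw [this, integral_withDensity_eq_integral_smul hmeas]
      congr 1
      ext y
      rw [NNReal.smul_def, Real.coe_toNNReal _ (hd_nonneg y), smul_eq_mul]
    rw [h1, h2, ← integral_const_mul]
    have h3 : ∫ y in B, (1 - p) * (Real.exp (q y) / c * f y) ∂P1
        = ∫ y in B, (p * Real.exp (q y) - p * f y) ∂P1 := by
      congr 1; ext y; exact hpoint y
    rw [h3, integral_sub (hint.restrict.const_mul p) (((hf_int P1).restrict).const_mul p),
      integral_const_mul, integral_const_mul]
    ring
  -- assemble
  have hnum := key A hA
  have hden : ∫ y, f y ∂P = p * c := by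
    have := key Set.univ MeasurableSet.univ
    simpa using this
  rw [hP0A A hA, hnum, hden, mul_div_mul_left _ _ hpne]
end

section
/- Let 𝔛 be a measurable space with a distinguished point ∗ such that {∗} is measurable, let H be a probability measure on 𝔛 with 0 < H({∗}) < 1, and let g, e: 𝔛 → ℝ be measurable with g(∗) = 0, e(∗) = 0, e > 0 on 𝔛 \ {∗}, g integrable and g·e integrable with respect to H, and 0 < ∫ e dH < ∞. Write p = 1 − H({∗}), let P1 be the restriction of H to 𝔛 \ {∗} normalized to a probability measure, let P0 be the probability measure with dP0 = e dP1 / ∫ e dP1, and let P = (1−p)·P0 + p·P1. Then ∫ g dP = (∫ g·e dH) · H({∗}) / (∫ e dH) + ∫ g dH. -/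
open MeasureTheory Real ENNReal NNReal

/-- The parameter of interest `∫ g dP` expressed as a functional of the
observation distribution `H`: with `p = 1 - H({∗})`, `P1` the normalized restriction of `H`
to the complement of `{∗}`, `P0` the `e`-tilted version of `P1` and `P = (1-p)·P0 + p·P1`,
we have `∫ g dP = (∫ g·e dH)·H({∗})/(∫ e dH) + ∫ g dH`. -/
theorem functional_chi_representation
    {𝔛 : Type*} [MeasurableSpace 𝔛] (star : 𝔛) (hstar : MeasurableSet ({star} : Set 𝔛))
    (H : Measure 𝔛) [IsProbabilityMeasure H]
    (hH0 : 0 < H {star}) (hH1 : H {star} < 1)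
    (g e : 𝔛 → ℝ) (hg : Measurable g) (he : Measurable e)
    (hgstar : g star = 0) (hestar : e star = 0)
    (hepos : ∀ x, x ≠ star → 0 < e x)
    (hgint : Integrable g H) (hgeint : Integrable (fun x => g x * e x) H)
    (heint : Integrable e H) (hepos' : 0 < ∫ x, e x ∂H)
    (p : ℝ) (hp : p = 1 - (H {star}).toReal)
    (P1 : Measure 𝔛)
    (hP1 : P1 = (H ({star}ᶜ))⁻¹ • H.restrict ({star}ᶜ))
    (P0 : Measure 𝔛)
    (hP0 : P0 = P1.withDensity (fun x => ENNReal.ofReal (e x / ∫ z, e z ∂P1)))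
    (P : Measure 𝔛)
    (hP : P = ENNReal.ofReal (1 - p) • P0 + ENNReal.ofReal p • P1) :
    ∫ x, g x ∂P =
      (∫ x, g x * e x ∂H) * (H {star}).toReal / (∫ x, e x ∂H) + ∫ x, g x ∂H := by
  set a : ℝ := (H {star}).toReal with ha_def
  have hHne : H {star} ≠ ∞ := measure_ne_top H _
  have ha0 : 0 < a := ENNReal.toReal_pos hH0.ne' hHne
  have ha1 : a < 1 := by
    have := (ENNReal.toReal_lt_toReal hHne (by simp)).2 hH1
    simpa using this
  have hp0 : 0 < p := by rw [hp]; linarith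
  have h1p : 1 - p = a := by rw [hp]; ring
  -- complement measure
  have hcompl : H ({star}ᶜ) = 1 - H {star} := by
    rw [measure_compl hstar hHne, measure_univ]
  have hcr : (H ({star}ᶜ)).toReal = p := by
    rw [hcompl, ENNReal.toReal_sub_of_le hH1.le (by simp), ENNReal.toReal_one, hp]
  have hcne0 : H ({star}ᶜ) ≠ 0 := by
    rw [hcompl]
    simp only [ne_eq, tsub_eq_zero_iff_le]
    exact fun h => absurd hH1 (not_lt.mpr h)
  have hcnetop : H ({star}ᶜ) ≠ ∞ := measure_ne_top H _
  -- integrability transfer to P1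
  have keyInt : ∀ f : 𝔛 → ℝ, Integrable f H → Integrable f P1 := by
    intro f hf
    rw [hP1]
    exact (hf.restrict).smul_measure (ENNReal.inv_ne_top.mpr hcne0)
  -- integral transfer to P1
  have key : ∀ f : 𝔛 → ℝ, Integrable f H → f star = 0 → ∫ x, f x ∂P1 = (∫ x, f x ∂H) / p := by
    intro f hf hf0
    have h1 : ∫ x in ({star} : Set 𝔛), f x ∂H = 0 :=
      setIntegral_eq_zero_of_forall_eq_zero (fun x hx => by rwa [Set.mem_singleton_iff.mp hx])
    have h2 := integral_add_compl hstar hf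
    rw [hP1, integral_smul_measure, ENNReal.toReal_inv, hcr, smul_eq_mul]
    rw [h1, zero_add] at h2
    rw [h2]
    field_simp
  have hgP1 : ∫ x, g x ∂P1 = (∫ x, g x ∂H) / p := key g hgint hgstar
  have heP1 : ∫ x, e x ∂P1 = (∫ x, e x ∂H) / p := key e heint hestar
  have hgeP1 : ∫ x, g x * e x ∂P1 = (∫ x, g x * e x ∂H) / p :=
    key _ hgeint (by rw [hgstar, zero_mul])
  set c : ℝ := ∫ z, e z ∂P1 with hc_def
  have hc0 : 0 < c := by rw [heP1]; positivity
  have henn : ∀ x, 0 ≤ e x := by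
    intro x
    by_cases hx : x = star
    · rw [hx, hestar]
    · exact (hepos x hx).le
  -- integral over P0
  have hdens : (fun x => ENNReal.ofReal (e x / c)) = (fun x => ((Real.toNNReal (e x / c) : ℝ≥0) : ℝ≥0∞)) := rfl
  have hdmeas : Measurable (fun x => Real.toNNReal (e x / c)) :=
    (he.div_const c).real_toNNReal
  have hsmul : (fun x => Real.toNNReal (e x / c) • g x) = (fun x => c⁻¹ * (g x * e x)) := by
    funext x
    rw [NNReal.smul_def, Real.coe_toNNReal _ (div_nonneg (henn x) hc0.le), smul_eq_mul]
    ring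
  have hgP0 : ∫ x, g x ∂P0 = (∫ x, g x * e x ∂H) / ∫ x, e x ∂H := by
    rw [hP0, hdens, integral_withDensity_eq_integral_smul hdmeas, hsmul,
      integral_const_mul, hgeP1, heP1]
    field_simp
  have hgP0int : Integrable g P0 := by
    rw [hP0, hdens, integrable_withDensity_iff_integrable_smul hdmeas, hsmul]
    exact (keyInt _ hgeint).const_mul _
  -- combine
  rw [hP, integral_add_measure ((hgP0int.smul_measure ENNReal.ofReal_ne_top))
      (((keyInt g hgint).smul_measure ENNReal.ofReal_ne_top)),
    integral_smul_measure, integral_smul_measure,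
    ENNReal.toReal_ofReal (by linarith : (0:ℝ) ≤ 1 - p),
    ENNReal.toReal_ofReal hp0.le, smul_eq_mul, smul_eq_mul, h1p, hgP0, hgP1]
  field_simp
end

section
/- Let n ≥ 1, let W_1, …, W_n be independent random variables with W_i exponentially distributed with rate parameter β_i > 0 (density β_i e^{−β_i x} on (0, ∞)), and let c_1, …, c_n ≥ 0 be real numbers. Then E[ (Σ_{i=1}^n c_i W_i) / (Σ_{i=1}^n W_i) ] = ∫_0^∞ ( Π_{j=1}^n β_j/(t + β_j) ) · ( Σ_{i=1}^n c_i/(t + β_i) ) dt. -/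
/-!
Since `a / s = ∫₀^∞ a e^{-s t} dt` for `s > 0`, Tonelli turns the left-hand side into
`∫₀^∞ E[(∑ c_i W_i) e^{-t ∑ W_j}] dt`. For fixed `t`, independence factors
`E[W_i e^{-t ∑ W_j}]` into `E[W_i e^{-t W_i}] ∏_{j ≠ i} E[e^{-t W_j}]
= β_i / (t + β_i)² ∏_{j ≠ i} β_j / (t + β_j)`, which is the integrand on the right.
-/

open MeasureTheory ProbabilityTheory Real Set Finset
open scoped ENNReal Nat

lemma lintegral_pow_mul_exp_neg_mul_Ioi (k : ℕ) {b : ℝ} (hb : 0 < b) :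
    ∫⁻ y in Ioi 0, ENNReal.ofReal (y ^ k * exp (-(b * y))) =
      ENNReal.ofReal (k ! / b ^ (k + 1)) := by
  have hGamma := integral_rpow_mul_exp_neg_mul_Ioi (a := k + 1) (by positivity) hb
  simp only [add_sub_cancel_right, rpow_natCast, Gamma_nat_eq_factorial] at hGamma
  rw [← Nat.cast_add_one, rpow_natCast, one_div_pow, one_div_mul_eq_div] at hGamma
  rw [← ofReal_integral_eq_lintegral_ofReal, hGamma]
  · exact Integrable.of_integral_ne_zero (by rw [hGamma]; positivity)
  · filter_upwards [ae_restrict_mem measurableSet_Ioi] with y hy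
    exact mul_nonneg (pow_nonneg (le_of_lt hy) k) (exp_pos _).le

lemma lintegral_pow_mul_exp_neg_mul_expMeasure (k : ℕ) {r t : ℝ} (hrt : 0 < t + r) :
    ∫⁻ y, ENNReal.ofReal (y ^ k * exp (-(t * y))) ∂expMeasure r =
      ENNReal.ofReal (r * (k ! / (t + r) ^ (k + 1))) := by
  have hdensity : ∀ y ∈ Ici (0 : ℝ),
      exponentialPDF r y * ENNReal.ofReal (y ^ k * exp (-(t * y))) =
        ENNReal.ofReal r * ENNReal.ofReal (y ^ k * exp (-((t + r) * y))) :=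
    fun y (hy : 0 ≤ y) => by
      rw [exponentialPDF_of_nonneg hy, ← ENNReal.ofReal_mul' (by positivity),
        ← ENNReal.ofReal_mul' (by positivity), add_mul, neg_add, exp_add]
      ring_nf
  have hsupport :
      (exponentialPDF r * fun y => ENNReal.ofReal (y ^ k * exp (-(t * y)))).support ⊆ Ici 0 :=
    fun y hy => mem_Ici.mpr <| not_lt.mp fun hneg => hy (by simp [exponentialPDF_of_neg hneg])
  have hmeas : Measurable (exponentialPDF r) := (measurable_exponentialPDFReal r).ennreal_ofReal
  change ∫⁻ y, _ ∂volume.withDensity (exponentialPDF r) = _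
  rw [lintegral_withDensity_eq_lintegral_mul _ hmeas (by fun_prop),
    ← setLIntegral_eq_of_support_subset hsupport]
  simp only [Pi.mul_apply]
  rw [setLIntegral_congr_fun measurableSet_Ici hdensity, lintegral_const_mul _ (by fun_prop),
    setLIntegral_congr Ioi_ae_eq_Ici.symm, lintegral_pow_mul_exp_neg_mul_Ioi k hrt,
    ← ENNReal.ofReal_mul' (by positivity)]

lemma ae_pos_expMeasure (r : ℝ) : ∀ᵐ y ∂expMeasure r, 0 < y := by
  rw [ae_iff]
  simp only [not_lt]
  change expMeasure r (Iic 0) = 0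
  rw [expMeasure, gammaMeasure, withDensity_apply _ measurableSet_Iic,
    setLIntegral_congr Iio_ae_eq_Iic.symm, lintegral_gammaPDF_of_nonpos le_rfl]

lemma ofReal_div_eq_lintegral_mul_exp_neg_mul {a s : ℝ} (ha : 0 ≤ a) (hs : 0 < s) :
    ENNReal.ofReal (a / s) = ∫⁻ t in Ioi 0, ENNReal.ofReal (a * exp (-(s * t))) := by
  have hlaplace := lintegral_pow_mul_exp_neg_mul_Ioi 0 hs
  simp only [pow_zero, one_mul, Nat.factorial_zero, Nat.cast_one, zero_add, pow_one] at hlaplace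
  simp_rw [ENNReal.ofReal_mul ha]
  rw [lintegral_const_mul _ (by fun_prop), hlaplace, ← ENNReal.ofReal_mul ha, mul_one_div]

lemma ofReal_sum_mul_div_sum_eq_lintegral {ι : Type*} [Fintype ι] {c x : ι → ℝ}
    (hc : ∀ i, 0 ≤ c i) (hx : ∀ i, 0 < x i) :
    ENNReal.ofReal ((∑ i, c i * x i) / ∑ i, x i) =
      ∫⁻ t in Ioi 0, ENNReal.ofReal ((∑ i, c i * x i) * exp (-((∑ i, x i) * t))) := by
  rcases isEmpty_or_nonempty ι with hι | hι
  · simp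
  · exact ofReal_div_eq_lintegral_mul_exp_neg_mul
      (sum_nonneg fun i _ => mul_nonneg (hc i) (hx i).le) (sum_pos (fun i _ => hx i) univ_nonempty)

/- The exponent `if j = i then 1 else 0` writes the `i`-th summand as a product over all `j` of
functions of `x j` alone, which is the shape that independence factorizes. -/
lemma sum_mul_mul_exp_eq_sum_mul_prod {ι : Type*} [Fintype ι] [DecidableEq ι]
    (c x : ι → ℝ) (t : ℝ) :
    (∑ i, c i * x i) * exp (-((∑ i, x i) * t)) =
      ∑ i, c i * ∏ j, x j ^ (if j = i then 1 else 0) * exp (-(t * x j)) := by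
  simp_rw [prod_mul_distrib, pow_ite, pow_one, pow_zero, Fintype.prod_ite_eq', ← exp_sum,
    sum_mul, ← sum_neg_distrib, mul_assoc, mul_comm t]

lemma prod_div_mul_sum_div_eq_sum_mul_prod {ι : Type*} [Fintype ι] [DecidableEq ι]
    (β c : ι → ℝ) {t : ℝ} (ht : ∀ j, t + β j ≠ 0) :
    (∏ j, β j / (t + β j)) * ∑ i, c i / (t + β i) =
      ∑ i, c i * ∏ j, β j * ((if j = i then 1 else 0) ! /
        (t + β j) ^ ((if j = i then 1 else 0) + 1)) := by
  have hfactor : ∀ i j, β j * ((if j = i then 1 else 0) ! /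
      (t + β j) ^ ((if j = i then 1 else 0) + 1)) =
        β j / (t + β j) * (if j = i then (t + β j)⁻¹ else 1) := fun i j => by
    have := ht j
    split_ifs <;> field_simp <;> norm_num
  simp_rw [hfactor, prod_mul_distrib, Fintype.prod_ite_eq', mul_sum]
  exact sum_congr rfl fun i _ => by ring

lemma ofReal_sum_mul_prod {ι κ : Type*} (s : Finset ι) (u : Finset κ) {c : ι → ℝ}
    {g : ι → κ → ℝ} (hc : ∀ i, 0 ≤ c i) (hg : ∀ i j, 0 ≤ g i j) :
    ENNReal.ofReal (∑ i ∈ s, c i * ∏ j ∈ u, g i j) =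
      ∑ i ∈ s, ENNReal.ofReal (c i) * ∏ j ∈ u, ENNReal.ofReal (g i j) := by
  rw [ENNReal.ofReal_sum_of_nonneg fun i _ => mul_nonneg (hc i) (prod_nonneg fun j _ => hg i j)]
  simp_rw [ENNReal.ofReal_mul (hc _), ENNReal.ofReal_prod_of_nonneg fun j _ => hg _ j]

section

variable {Ω ι : Type*} [MeasurableSpace Ω] {μ : Measure Ω} [Fintype ι] {W : ι → Ω → ℝ}
  {β c : ι → ℝ}

lemma ae_forall_pos_of_map_eq_expMeasure (hW : ∀ i, AEMeasurable (W i) μ)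
    (hlaw : ∀ i, μ.map (W i) = expMeasure (β i)) : ∀ᵐ ω ∂μ, ∀ i, 0 < W i ω :=
  ae_all_iff.2 fun i => ae_of_ae_map (hW i) (by rw [hlaw i]; exact ae_pos_expMeasure _)

lemma lintegral_ofReal_sum_mul_mul_exp_neg_sum_mul (hW : ∀ i, Measurable (W i))
    (hindep : iIndepFun W μ) (hlaw : ∀ i, μ.map (W i) = expMeasure (β i)) (hβ : ∀ i, 0 < β i)
    (hc : ∀ i, 0 ≤ c i) {t : ℝ} (ht : 0 ≤ t) :
    ∫⁻ ω, ENNReal.ofReal ((∑ i, c i * W i ω) * exp (-((∑ i, W i ω) * t))) ∂μ =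
      ENNReal.ofReal ((∏ j, β j / (t + β j)) * ∑ i, c i / (t + β i)) := by
  classical
  have htβ : ∀ j, 0 < t + β j := fun j => add_pos_of_nonneg_of_pos ht (hβ j)
  let k : ι → ι → ℕ := fun i j => if j = i then 1 else 0
  have hfactor : ∀ i j, ∫⁻ ω, ENNReal.ofReal (W j ω ^ k i j * exp (-(t * W j ω))) ∂μ =
      ENNReal.ofReal (β j * ((k i j) ! / (t + β j) ^ (k i j + 1))) := fun i j => by
    rw [← lintegral_map (f := fun y => ENNReal.ofReal (y ^ k i j * exp (-(t * y)))) (by fun_prop)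
      (hW j), hlaw j, lintegral_pow_mul_exp_neg_mul_expMeasure _ (htβ j)]
  calc ∫⁻ ω, ENNReal.ofReal ((∑ i, c i * W i ω) * exp (-((∑ i, W i ω) * t))) ∂μ
      = ∫⁻ ω, ∑ i, ENNReal.ofReal (c i) *
          ∏ j, ENNReal.ofReal (W j ω ^ k i j * exp (-(t * W j ω))) ∂μ := by
        refine lintegral_congr_ae ?_
        filter_upwards [ae_forall_pos_of_map_eq_expMeasure (fun i => (hW i).aemeasurable) hlaw]
          with ω hω
        rw [sum_mul_mul_exp_eq_sum_mul_prod, ofReal_sum_mul_prod _ _ hc fun i j => by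
          have := hω j; positivity]
    _ = ∑ i, ENNReal.ofReal (c i) *
          ∏ j, ∫⁻ ω, ENNReal.ofReal (W j ω ^ k i j * exp (-(t * W j ω))) ∂μ := by
        rw [lintegral_finsetSum _ fun i _ => by fun_prop]
        refine sum_congr rfl fun i _ => ?_
        rw [lintegral_const_mul _ (by fun_prop)]
        congr 1
        exact lintegral_prod_eq_prod_lintegral_of_indepFun _ _
          (hindep.comp (fun j y => ENNReal.ofReal (y ^ k i j * exp (-(t * y))))
            fun j => by fun_prop)
          fun j => by fun_prop
    _ = ENNReal.ofReal ((∏ j, β j / (t + β j)) * ∑ i, c i / (t + β i)) := by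
        simp_rw [hfactor]
        rw [prod_div_mul_sum_div_eq_sum_mul_prod _ _ fun j => (htβ j).ne',
          ofReal_sum_mul_prod _ _ hc fun i j => by have := htβ j; have := hβ j; positivity]

lemma lintegral_ofReal_sum_mul_div_sum (hW : ∀ i, Measurable (W i))
    (hindep : iIndepFun W μ) (hlaw : ∀ i, μ.map (W i) = expMeasure (β i)) (hβ : ∀ i, 0 < β i)
    (hc : ∀ i, 0 ≤ c i) :
    ∫⁻ ω, ENNReal.ofReal ((∑ i, c i * W i ω) / ∑ i, W i ω) ∂μ =
      ∫⁻ t in Ioi 0, ENNReal.ofReal ((∏ j, β j / (t + β j)) * ∑ i, c i / (t + β i)) := by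
  have := hindep.isProbabilityMeasure
  calc ∫⁻ ω, ENNReal.ofReal ((∑ i, c i * W i ω) / ∑ i, W i ω) ∂μ
      = ∫⁻ ω, (∫⁻ t in Ioi 0,
          ENNReal.ofReal ((∑ i, c i * W i ω) * exp (-((∑ i, W i ω) * t)))) ∂μ := by
        refine lintegral_congr_ae ?_
        filter_upwards [ae_forall_pos_of_map_eq_expMeasure (fun i => (hW i).aemeasurable) hlaw]
          with ω hω
        exact ofReal_sum_mul_div_sum_eq_lintegral hc hω
    _ = ∫⁻ t in Ioi 0, ∫⁻ ω,
          ENNReal.ofReal ((∑ i, c i * W i ω) * exp (-((∑ i, W i ω) * t))) ∂μ :=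
        lintegral_lintegral_swap (by fun_prop)
    _ = _ := setLIntegral_congr_fun measurableSet_Ioi fun t ht =>
        lintegral_ofReal_sum_mul_mul_exp_neg_sum_mul hW hindep hlaw hβ hc (le_of_lt ht)

lemma integral_sum_mul_div_sum (hW : ∀ i, Measurable (W i))
    (hindep : iIndepFun W μ) (hlaw : ∀ i, μ.map (W i) = expMeasure (β i)) (hβ : ∀ i, 0 < β i)
    (hc : ∀ i, 0 ≤ c i) :
    ∫ ω, (∑ i, c i * W i ω) / ∑ i, W i ω ∂μ =
      ∫ t in Ioi 0, (∏ j, β j / (t + β j)) * ∑ i, c i / (t + β i) := by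
  have hratio_nonneg : 0 ≤ᵐ[μ] fun ω => (∑ i, c i * W i ω) / ∑ i, W i ω := by
    filter_upwards [ae_forall_pos_of_map_eq_expMeasure (fun i => (hW i).aemeasurable) hlaw]
      with ω hω
    exact div_nonneg (sum_nonneg fun i _ => mul_nonneg (hc i) (hω i).le)
      (sum_nonneg fun i _ => (hω i).le)
  have hlaplace_nonneg : 0 ≤ᵐ[volume.restrict (Ioi 0)]
      fun t : ℝ => (∏ j, β j / (t + β j)) * ∑ i, c i / (t + β i) := by
    filter_upwards [ae_restrict_mem measurableSet_Ioi] with t (ht : 0 < t)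
    have htβ : ∀ j, 0 < t + β j := fun j => add_pos ht (hβ j)
    exact mul_nonneg (prod_nonneg fun j _ => div_nonneg (hβ j).le (htβ j).le)
      (sum_nonneg fun i _ => div_nonneg (hc i) (htβ i).le)
  rw [integral_eq_lintegral_of_nonneg_ae hratio_nonneg
      (by fun_prop : Measurable _).aestronglyMeasurable,
    integral_eq_lintegral_of_nonneg_ae hlaplace_nonneg
      (by fun_prop : Measurable _).aestronglyMeasurable,
    lintegral_ofReal_sum_mul_div_sum hW hindep hlaw hβ hc]

end

theorem expectation_ratio_weighted_exponential_sums_general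
    {Ω : Type*} [MeasurableSpace Ω] (μ : Measure Ω)
    (n : ℕ)
    (W : Fin n → Ω → ℝ) (β : Fin n → ℝ) (hβ : ∀ i, 0 < β i)
    (hindep : iIndepFun W μ)
    (hlaw : ∀ i, Measure.map (W i) μ = expMeasure (β i))
    (c : Fin n → ℝ) (hc : ∀ i, 0 ≤ c i) :
    ∫ ω, (∑ i, c i * W i ω) / (∑ i, W i ω) ∂μ =
      ∫ t in Set.Ioi (0 : ℝ),
        (∏ j, β j / (t + β j)) * (∑ i, c i / (t + β i)) := by
  have hW : ∀ i, AEMeasurable (W i) μ := fun i => AEMeasurable.of_map_ne_zero <| by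
    have := isProbabilityMeasure_expMeasure (hβ i)
    rw [hlaw i]
    exact IsProbabilityMeasure.ne_zero _
  choose V hV hWV using hW
  calc ∫ ω, (∑ i, c i * W i ω) / ∑ i, W i ω ∂μ
      = ∫ ω, (∑ i, c i * V i ω) / ∑ i, V i ω ∂μ := integral_congr_ae <| by
        filter_upwards [ae_all_iff.2 hWV] with ω hω
        simp only [hω]
    _ = _ := integral_sum_mul_div_sum hV (hindep.congr hWV)
        (fun i => by rw [← Measure.map_congr (hWV i), hlaw i]) hβ hc

/-- Integral expression for ratios of weighted sums of independent
exponential variables. If `W_1, …, W_n` are independent, `W_i` exponential with rate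
`β_i > 0`, and `c_1, …, c_n ≥ 0`, then
`E[(Σ c_i W_i)/(Σ W_i)] = ∫_0^∞ (Π_j β_j/(t+β_j)) (Σ_i c_i/(t+β_i)) dt`. -/
theorem expectation_ratio_weighted_exponential_sums
    {Ω : Type*} [MeasurableSpace Ω] (μ : Measure Ω) [IsProbabilityMeasure μ]
    (n : ℕ) (hn : 1 ≤ n)
    (W : Fin n → Ω → ℝ) (β : Fin n → ℝ) (hβ : ∀ i, 0 < β i)
    (hindep : iIndepFun W μ)
    (hlaw : ∀ i, Measure.map (W i) μ = expMeasure (β i))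
    (c : Fin n → ℝ) (hc : ∀ i, 0 ≤ c i) :
    ∫ ω, (∑ i, c i * W i ω) / (∑ i, W i ω) ∂μ =
      ∫ t in Set.Ioi (0 : ℝ),
        (∏ j, β j / (t + β j)) * (∑ i, c i / (t + β i)) :=
  expectation_ratio_weighted_exponential_sums_general μ n W β hβ hindep hlaw c hc
end

section
/- Let (𝔜, 𝒴) be a measurable space, let a be a nonzero finite measure on 𝔜, let b̲ > 0 and let b: 𝔜 → [b̲, ∞) be measurable, let P_0 be a probability measure on 𝔜 with ∫ b dP_0 < ∞, and let X_1, X_2, … be i.i.d. random variables with law P_0. Define ψ(λ) = ∫ log(1 + λ/b(y)) da(y) and, for each n ≥ 1 and λ > 0, f_n(λ) = λ^{n−1} e^{−ψ(λ)} Π_{i=1}^n (λ + b(X_i))^{−1}. Then for every d > 0 and every c with 0 < c < b̲/(a(𝔜) + 1 + d), almost surely n^d · ( ∫_0^{c n / log n} f_n(λ) dλ ) / ( ∫_0^∞ f_n(λ) dλ ) → 0 as n → ∞. -/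
/-!
On `(0, t]` the density `f_n` is at most
`(t / (t + b̲))^(n-1) / b̲ ≤ exp (-(n-1) b̲ / (t + b̲)) / b̲`, while on `(n, 2n]` it is at least
`exp (-S_n / n - ψ(2n)) / (2n)`, where `S_n = ∑_{i<n} b(X_i)` and `ψ(λ) ≤ a(𝔜) log (1 + λ / b̲)`.
By the strong law `S_n / n` is almost surely bounded, so for `t = c n / log n` the ratio is at
most a constant times the exponential of
`d log n + log t + a(𝔜) log (1 + 2n / b̲) - (n-1) b̲ / (t + b̲)`, which is
`(d + 1 + a(𝔜) - b̲ / c + o(1)) log n` and tends to `-∞` by the choice of `c`.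
-/

open MeasureTheory ProbabilityTheory Real Filter Topology Finset Set

lemma tendsto_log_div_self_atTop : Tendsto (fun x : ℝ => log x / x) atTop (𝓝 0) := by
  simpa using tendsto_pow_log_div_mul_add_atTop 1 0 1 one_ne_zero

lemma tendsto_log_natCast_div_natCast : Tendsto (fun n : ℕ => log n / n) atTop (𝓝 0) :=
  tendsto_log_div_self_atTop.comp tendsto_natCast_atTop_atTop

lemma tendsto_log_log_natCast_div_log : Tendsto (fun n : ℕ => log (log n) / log n) atTop (𝓝 0) :=
  tendsto_log_div_self_atTop.comp (tendsto_log_atTop.comp tendsto_natCast_atTop_atTop)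

lemma eventually_log_natCast_pos : ∀ᶠ n : ℕ in atTop, 0 < log n := by
  filter_upwards [eventually_ge_atTop 2] with n hn
  exact log_pos (by exact_mod_cast hn)

lemma tendsto_log_mul_div_log_div_log {c : ℝ} (hc : 0 < c) :
    Tendsto (fun n : ℕ => log (c * n / log n) / log n) atTop (𝓝 1) := by
  have h := ((tendsto_const_nhds (x := log c)).div_atTop
    (tendsto_log_atTop.comp tendsto_natCast_atTop_atTop)).add_const 1 |>.sub
      tendsto_log_log_natCast_div_log
  rw [zero_add, sub_zero] at h
  refine h.congr' ?_
  filter_upwards [eventually_log_natCast_pos] with n hn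
  have hn0 : (0 : ℝ) < n := one_pos.trans ((log_pos_iff n.cast_nonneg).1 hn)
  rw [log_div (by positivity) hn.ne', log_mul hc.ne' hn0.ne']
  simp only [Function.comp]
  field_simp

lemma tendsto_log_one_add_mul_div_log {k : ℝ} (hk : 0 < k) :
    Tendsto (fun n : ℕ => log (1 + k * n) / log n) atTop (𝓝 1) := by
  have h := ((((tendsto_one_div_atTop_nhds_zero_nat (𝕜 := ℝ)).add_const k).log
    (by positivity)).div_atTop (tendsto_log_atTop.comp tendsto_natCast_atTop_atTop)).add_const 1
  rw [zero_add] at h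
  refine h.congr' ?_
  filter_upwards [eventually_log_natCast_pos] with n hn
  have hn0 : (0 : ℝ) < n := one_pos.trans ((log_pos_iff n.cast_nonneg).1 hn)
  have : 1 + k * n = (1 / n + k) * n := by field_simp
  rw [this, log_mul (by positivity) hn0.ne']
  simp only [Function.comp]
  field_simp

lemma tendsto_sub_one_mul_div_div_log {b c : ℝ} (hb : 0 < b) (hc : 0 < c) :
    Tendsto (fun n : ℕ => ((n : ℝ) - 1) * (b / (c * n / log n + b)) / log n) atTop
      (𝓝 (b / c)) := by
  have h := (((tendsto_one_div_atTop_nhds_zero_nat (𝕜 := ℝ)).const_sub 1).mul_const b).div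
    (tendsto_log_natCast_div_natCast.const_mul b |>.const_add c) (by simp [hc.ne'])
  rw [sub_zero, one_mul, mul_zero, add_zero] at h
  refine h.congr' ?_
  filter_upwards [eventually_log_natCast_pos] with n hn
  have hn0 : (0 : ℝ) < n := one_pos.trans ((log_pos_iff n.cast_nonneg).1 hn)
  simp only [Pi.div_apply]
  field_simp

lemma tendsto_exp_of_tendsto_div_log {L : ℕ → ℝ} {r : ℝ} (hr : r < 0)
    (hL : Tendsto (fun n => L n / log n) atTop (𝓝 r)) :
    Tendsto (fun n => exp (L n)) atTop (𝓝 0) := by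
  refine tendsto_exp_atBot.comp ?_
  refine ((tendsto_log_atTop.comp tendsto_natCast_atTop_atTop).atTop_mul_neg hr hL).congr' ?_
  filter_upwards [eventually_log_natCast_pos] with n hn
  simp only [Function.comp]
  field_simp

lemma tendsto_exp_concentration_exponent {blow c d A : ℝ} (hblow : 0 < blow) (hc : 0 < c)
    (hκ : d + 1 + A < blow / c) :
    Tendsto (fun n : ℕ => exp (d * log n + log (c * n / log n) + A * log (1 + 2 * n / blow)
      - ((n : ℝ) - 1) * (blow / (c * n / log n + blow)))) atTop (𝓝 0) := by
  refine tendsto_exp_of_tendsto_div_log (r := d + 1 + A * 1 - blow / c) (by linarith) ?_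
  refine ((((tendsto_const_nhds (x := d)).add (tendsto_log_mul_div_log_div_log hc)).add
    ((tendsto_log_one_add_mul_div_log (k := 2 / blow) (by positivity)).const_mul A)).sub
      (tendsto_sub_one_mul_div_div_log hblow hc)).congr' ?_
  filter_upwards [eventually_log_natCast_pos] with n hn
  field_simp

lemma div_add_pow_le_exp {t b : ℝ} (ht : 0 ≤ t) (hb : 0 < b) (k : ℕ) :
    (t / (t + b)) ^ k ≤ exp (-(k * (b / (t + b)))) := by
  have hle : t / (t + b) ≤ exp (-(b / (t + b))) := by
    calc t / (t + b) = -(b / (t + b)) + 1 := by field_simp; ring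
      _ ≤ exp (-(b / (t + b))) := add_one_le_exp _
  rw [neg_mul_eq_mul_neg, exp_nat_mul]
  exact pow_le_pow_left₀ (by positivity) hle k

lemma exp_neg_sum_div_le_prod_div_add {ι : Type*} (s : Finset ι) {β : ι → ℝ}
    (hβ : ∀ i, 0 ≤ β i) {x : ℝ} (hx : 0 < x) :
    exp (-((∑ i ∈ s, β i) / x)) ≤ ∏ i ∈ s, x / (x + β i) := by
  rw [sum_div, ← sum_neg_distrib, exp_sum]
  refine prod_le_prod (fun i _ => (exp_pos _).le) fun i _ => ?_
  have hβx : 0 ≤ β i / x := div_nonneg (hβ i) hx.le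
  calc exp (-(β i / x)) = (exp (β i / x))⁻¹ := exp_neg _
    _ ≤ (β i / x + 1)⁻¹ := inv_anti₀ (by positivity) (add_one_le_exp _)
    _ = x / (x + β i) := by field_simp; ring

lemma prod_div_add_le_pow {ι : Type*} (s : Finset ι) {β : ι → ℝ} {blow : ℝ} (hblow : 0 < blow)
    (hβ : ∀ i, blow ≤ β i) {x : ℝ} (hx : 0 ≤ x) :
    ∏ i ∈ s, x / (x + β i) ≤ (x / (x + blow)) ^ s.card := by
  rw [← prod_const]
  refine prod_le_prod (fun i _ => div_nonneg hx (by linarith [hβ i])) fun i _ => ?_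
  exact div_le_div_of_nonneg_left hx (by positivity) (by linarith [hβ i])

lemma div_add_le_div_add {x t b : ℝ} (hb : 0 < b) (hx : 0 ≤ x) (hxt : x ≤ t) :
    x / (x + b) ≤ t / (t + b) := by
  rw [div_le_div_iff₀ (by positivity) (by linarith)]
  nlinarith

noncomputable def mixingDensity (ψ : ℝ → ℝ) (β : ℕ → ℝ) (n : ℕ) (lam : ℝ) : ℝ :=
  lam ^ (n - 1) * exp (-ψ lam) * ∏ i ∈ range n, (lam + β i)⁻¹

section mixingDensity

variable {ψ : ℝ → ℝ} {β : ℕ → ℝ} {n : ℕ} {lam blow : ℝ}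

lemma mixingDensity_nonneg (hβ : ∀ i, 0 ≤ β i) (hlam : 0 ≤ lam) :
    0 ≤ mixingDensity ψ β n lam := by
  unfold mixingDensity
  exact mul_nonneg (mul_nonneg (pow_nonneg hlam _) (exp_pos _).le)
    (prod_nonneg fun i _ => inv_nonneg.2 (add_nonneg hlam (hβ i)))

lemma mixingDensity_eq (hn : 0 < n) (hlam : 0 < lam) :
    mixingDensity ψ β n lam = exp (-ψ lam) * (∏ i ∈ range n, lam / (lam + β i)) / lam := by
  obtain ⟨k, rfl⟩ : ∃ k, n = k + 1 := ⟨n - 1, by omega⟩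
  simp only [mixingDensity, div_eq_mul_inv, prod_mul_distrib, prod_const, card_range,
    Nat.add_sub_cancel, pow_succ]
  field_simp

lemma mixingDensity_le (hblow : 0 < blow) (hβ : ∀ i, blow ≤ β i) (hψ : 0 ≤ ψ lam) (hn : 0 < n)
    (hlam : 0 < lam) {t : ℝ} (hlt : lam ≤ t) :
    mixingDensity ψ β n lam ≤ (t / (t + blow)) ^ (n - 1) / blow := by
  obtain ⟨k, rfl⟩ : ∃ k, n = k + 1 := ⟨n - 1, by omega⟩
  have hprod := prod_div_add_le_pow (range (k + 1)) hblow hβ hlam.le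
  rw [card_range] at hprod
  calc mixingDensity ψ β (k + 1) lam ≤ 1 * (lam / (lam + blow)) ^ (k + 1) / lam := by
        rw [mixingDensity_eq hn hlam]
        refine div_le_div_of_nonneg_right (mul_le_mul (exp_le_one_iff.2 (neg_nonpos.2 hψ)) hprod
          (prod_nonneg fun i _ => div_nonneg hlam.le ?_) zero_le_one) hlam.le
        linarith [hβ i]
    _ = (lam / (lam + blow)) ^ k / (lam + blow) := by
        rw [pow_succ]; field_simp
    _ ≤ (t / (t + blow)) ^ (k + 1 - 1) / blow := by
        have ht : 0 < t := hlam.trans_le hlt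
        rw [Nat.add_sub_cancel]
        exact div_le_div₀ (by positivity)
          (pow_le_pow_left₀ (by positivity) (div_add_le_div_add hblow hlam.le hlt) k) hblow
          (by linarith)

lemma le_mixingDensity (hβ : ∀ i, 0 ≤ β i) (hn : 0 < n) (hlam : n < lam) (hlam' : lam ≤ 2 * n)
    {B : ℝ} (hψ : ψ lam ≤ B) :
    exp (-((∑ i ∈ range n, β i) / n) - B) / (2 * n) ≤ mixingDensity ψ β n lam := by
  have hn' : (0 : ℝ) < n := Nat.cast_pos.2 hn
  have hlam0 : 0 < lam := hn'.trans hlam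
  have hS : 0 ≤ ∑ i ∈ range n, β i := sum_nonneg fun i _ => hβ i
  have hprod : exp (-((∑ i ∈ range n, β i) / n)) ≤ ∏ i ∈ range n, lam / (lam + β i) :=
    calc exp (-((∑ i ∈ range n, β i) / n)) ≤ exp (-((∑ i ∈ range n, β i) / lam)) := by
          gcongr
      _ ≤ _ := exp_neg_sum_div_le_prod_div_add _ hβ hlam0
  have hprod0 : 0 ≤ ∏ i ∈ range n, lam / (lam + β i) :=
    prod_nonneg fun i _ => div_nonneg hlam0.le (add_nonneg hlam0.le (hβ i))
  rw [mixingDensity_eq hn hlam0, sub_eq_add_neg, exp_add, mul_comm]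
  exact div_le_div₀ (mul_nonneg (exp_pos _).le hprod0)
    (mul_le_mul (exp_le_exp.2 (neg_le_neg hψ)) hprod (exp_pos _).le (exp_pos _).le)
    hlam0 hlam'

lemma setIntegral_Ioc_mixingDensity_le (hblow : 0 < blow) (hβ : ∀ i, blow ≤ β i)
    (hψ : ∀ lam, 0 < lam → 0 ≤ ψ lam) (hn : 0 < n) {t : ℝ} (ht : 0 ≤ t) :
    ∫ lam in Ioc 0 t, mixingDensity ψ β n lam ≤ t * ((t / (t + blow)) ^ (n - 1) / blow) := by
  have hβ0 : ∀ i, 0 ≤ β i := fun i => hblow.le.trans (hβ i)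
  calc ∫ lam in Ioc 0 t, mixingDensity ψ β n lam
      ≤ ∫ _ in Ioc 0 t, (t / (t + blow)) ^ (n - 1) / blow := by
        refine integral_mono_of_nonneg ?_ (integrableOn_const measure_Ioc_lt_top.ne) ?_
        · filter_upwards [ae_restrict_mem measurableSet_Ioc] with lam hlam
          exact mixingDensity_nonneg hβ0 hlam.1.le
        · filter_upwards [ae_restrict_mem measurableSet_Ioc] with lam hlam
          exact mixingDensity_le hblow hβ (hψ lam hlam.1) hn hlam.1 hlam.2
    _ = t * ((t / (t + blow)) ^ (n - 1) / blow) := by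
        rw [setIntegral_const, measureReal_def, volume_Ioc, ENNReal.toReal_ofReal (by linarith),
          sub_zero, smul_eq_mul]

lemma le_setIntegral_Ioi_mixingDensity (hβ : ∀ i, 0 ≤ β i) (hn : 0 < n) {B : ℝ}
    (hψ : ∀ lam ∈ Ioc (n : ℝ) (2 * n), ψ lam ≤ B)
    (hint : IntegrableOn (mixingDensity ψ β n) (Ioi 0)) :
    exp (-((∑ i ∈ range n, β i) / n) - B) / 2 ≤ ∫ lam in Ioi 0, mixingDensity ψ β n lam := by
  have hn' : (0 : ℝ) < n := Nat.cast_pos.2 hn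
  have hsub : Ioc (n : ℝ) (2 * n) ⊆ Ioi 0 := fun lam hlam => hn'.trans hlam.1
  calc exp (-((∑ i ∈ range n, β i) / n) - B) / 2
      = exp (-((∑ i ∈ range n, β i) / n) - B) / (2 * n) * volume.real (Ioc (n : ℝ) (2 * n)) := by
        rw [measureReal_def, volume_Ioc, ENNReal.toReal_ofReal (by linarith)]
        field_simp
        ring
    _ ≤ ∫ lam in Ioc (n : ℝ) (2 * n), mixingDensity ψ β n lam :=
        setIntegral_ge_of_const_le_real measurableSet_Ioc measure_Ioc_lt_top.ne
          (fun lam hlam => le_mixingDensity hβ hn hlam.1 hlam.2 (hψ lam hlam)) (hint.mono_set hsub)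
    _ ≤ ∫ lam in Ioi 0, mixingDensity ψ β n lam := by
        refine setIntegral_mono_set hint ?_ hsub.eventuallyLE
        filter_upwards [ae_restrict_mem measurableSet_Ioi] with lam hlam
        exact mixingDensity_nonneg hβ (le_of_lt hlam)

lemma rpow_mul_setIntegral_mixingDensity_div_le (hblow : 0 < blow) (hβ : ∀ i, blow ≤ β i)
    (hψ : ∀ lam, 0 < lam → 0 ≤ ψ lam) {B : ℝ} (hψB : ∀ lam ∈ Ioc (n : ℝ) (2 * n), ψ lam ≤ B)
    (hn : 0 < n) {t : ℝ} (ht : 0 ≤ t) (d : ℝ) :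
    (n : ℝ) ^ d * (∫ lam in Ioc 0 t, mixingDensity ψ β n lam) /
        (∫ lam in Ioi 0, mixingDensity ψ β n lam)
      ≤ (n : ℝ) ^ d * (t * ((t / (t + blow)) ^ (n - 1) / blow)) /
        (exp (-((∑ i ∈ range n, β i) / n) - B) / 2) := by
  have hβ0 : ∀ i, 0 ≤ β i := fun i => hblow.le.trans (hβ i)
  have hnd : 0 ≤ (n : ℝ) ^ d := rpow_nonneg n.cast_nonneg d
  by_cases hint : IntegrableOn (mixingDensity ψ β n) (Ioi 0)
  · refine div_le_div₀ (by positivity) (mul_le_mul_of_nonneg_left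
      (setIntegral_Ioc_mixingDensity_le hblow hβ hψ hn ht) hnd) (by positivity)
      (le_setIntegral_Ioi_mixingDensity hβ0 hn hψB hint)
  · -- the denominator is then the junk value `0`
    rw [integral_undef hint, div_zero]
    positivity

theorem tendsto_rpow_mul_setIntegral_mixingDensity_div {A M c d : ℝ} (hblow : 0 < blow)
    (hβ : ∀ i, blow ≤ β i) (hψ : ∀ lam, 0 < lam → 0 ≤ ψ lam) (hA : 0 ≤ A)
    (hψA : ∀ lam, 0 < lam → ψ lam ≤ A * log (1 + lam / blow))
    (hmean : ∀ᶠ n : ℕ in atTop, (∑ i ∈ range n, β i) / n ≤ M) (hc : 0 < c)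
    (hκ : d + 1 + A < blow / c) :
    Tendsto (fun n : ℕ => (n : ℝ) ^ d *
        (∫ lam in Ioc 0 (c * n / log n), mixingDensity ψ β n lam) /
        (∫ lam in Ioi 0, mixingDensity ψ β n lam)) atTop (𝓝 0) := by
  have hβ0 : ∀ i, 0 ≤ β i := fun i => hblow.le.trans (hβ i)
  have hbound := (tendsto_exp_concentration_exponent hblow hc hκ).const_mul (2 / blow * exp M)
  rw [mul_zero] at hbound
  refine squeeze_zero' (Eventually.of_forall fun n => ?_) ?_ hbound
  · exact div_nonneg (mul_nonneg (rpow_nonneg n.cast_nonneg d)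
      (setIntegral_nonneg measurableSet_Ioc fun lam h => mixingDensity_nonneg hβ0 h.1.le))
      (setIntegral_nonneg measurableSet_Ioi fun lam h => mixingDensity_nonneg hβ0 h.le)
  filter_upwards [eventually_log_natCast_pos, hmean] with n hlog hmean_n
  have hn : (0 : ℝ) < n := one_pos.trans ((log_pos_iff n.cast_nonneg).1 hlog)
  set t := c * n / log n
  have ht : 0 < t := by positivity
  have hψB : ∀ lam ∈ Ioc (n : ℝ) (2 * n), ψ lam ≤ A * log (1 + 2 * n / blow) := by
    rintro lam ⟨hlam, hlam'⟩
    have hlam0 : 0 < lam := hn.trans hlam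
    exact (hψA lam hlam0).trans (by gcongr)
  have hpow := div_add_pow_le_exp ht.le hblow (n - 1)
  rw [Nat.cast_pred (Nat.cast_pos.1 hn)] at hpow
  refine (rpow_mul_setIntegral_mixingDensity_div_le hblow hβ hψ hψB (Nat.cast_pos.1 hn) ht.le
    d).trans ?_
  calc (n : ℝ) ^ d * (t * ((t / (t + blow)) ^ (n - 1) / blow)) /
        (exp (-((∑ i ∈ range n, β i) / n) - A * log (1 + 2 * n / blow)) / 2)
      = 2 / blow * (exp (d * log n) * exp (log t) * (t / (t + blow)) ^ (n - 1) *
          exp ((∑ i ∈ range n, β i) / n) * exp (A * log (1 + 2 * n / blow))) := by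
        rw [rpow_def_of_pos hn, exp_log ht, sub_eq_add_neg, exp_add, exp_neg, exp_neg,
          mul_comm (log _)]
        field_simp
    _ ≤ 2 / blow * (exp (d * log n) * exp (log t) *
          exp (-(((n : ℝ) - 1) * (blow / (t + blow)))) * exp M *
          exp (A * log (1 + 2 * n / blow))) := by
        gcongr
    _ = _ := by
        simp only [exp_add, exp_sub, exp_neg]
        field_simp

end mixingDensity

section LogIntegral

variable {𝔜 : Type*} [MeasurableSpace 𝔜] (a : Measure 𝔜) {b : 𝔜 → ℝ} {lam : ℝ}

lemma integral_log_one_add_div_nonneg (hb : ∀ y, 0 ≤ b y) (hlam : 0 ≤ lam) :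
    0 ≤ ∫ y, log (1 + lam / b y) ∂a :=
  integral_nonneg fun y => log_nonneg (le_add_of_nonneg_right (div_nonneg hlam (hb y)))

lemma integral_log_one_add_div_le [IsFiniteMeasure a] {blow : ℝ} (hblow : 0 < blow)
    (hb : ∀ y, blow ≤ b y) (hlam : 0 ≤ lam) :
    ∫ y, log (1 + lam / b y) ∂a ≤ a.real univ * log (1 + lam / blow) := by
  have hb0 : ∀ y, 0 ≤ b y := fun y => hblow.le.trans (hb y)
  calc ∫ y, log (1 + lam / b y) ∂a ≤ ∫ _, log (1 + lam / blow) ∂a := by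
        refine integral_mono_of_nonneg (.of_forall fun y => ?_) (integrable_const _)
          (.of_forall fun y => ?_)
        · exact log_nonneg (le_add_of_nonneg_right (div_nonneg hlam (hb0 y)))
        · have := div_le_div_of_nonneg_left hlam hblow (hb y)
          exact log_le_log (by linarith [div_nonneg hlam (hb0 y)]) (by linarith)
    _ = a.real univ * log (1 + lam / blow) := by rw [integral_const, smul_eq_mul]

end LogIntegral

theorem ae_tendsto_sum_range_comp_div {𝔜 Ω : Type*} [MeasurableSpace 𝔜] [MeasurableSpace Ω]
    {μ : Measure Ω} {P : Measure 𝔜} {X : ℕ → Ω → 𝔜} (hX : ∀ i, Measurable (X i))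
    (hindep : iIndepFun X μ) (hlaw : ∀ i, μ.map (X i) = P) {g : 𝔜 → ℝ} (hg : Measurable g)
    (hgP : Integrable g P) :
    ∀ᵐ ω ∂μ, Tendsto (fun n : ℕ => (∑ i ∈ range n, g (X i ω)) / n) atTop (𝓝 (∫ y, g y ∂P)) := by
  have hident : ∀ i, IdentDistrib (g ∘ X i) (g ∘ X 0) μ μ := fun i =>
    ⟨(hg.comp (hX i)).aemeasurable, (hg.comp (hX 0)).aemeasurable, by
      rw [← Measure.map_map hg (hX i), ← Measure.map_map hg (hX 0), hlaw i, hlaw 0]⟩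
  have hint : Integrable (g ∘ X 0) μ := ((hlaw 0).symm ▸ hgP).comp_measurable (hX 0)
  have hmean : μ[g ∘ X 0] = ∫ y, g y ∂P := by
    rw [← hlaw 0, integral_map (hX 0).aemeasurable hg.aestronglyMeasurable, Function.comp_def]
  rw [← hmean]
  exact strong_law_ae_real (fun i => g ∘ X i) hint
    (fun i j hij => (hindep.indepFun hij).comp hg hg) hident

theorem mixing_distribution_concentration_general
    {𝔜 : Type*} [MeasurableSpace 𝔜]
    (a : Measure 𝔜) [IsFiniteMeasure a]
    (blow : ℝ) (hblow : 0 < blow)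
    (b : 𝔜 → ℝ) (hbmeas : Measurable b) (hb : ∀ y, blow ≤ b y)
    {Ω : Type*} [MeasurableSpace Ω] (μ : Measure Ω)
    (P0 : Measure 𝔜)
    (hbint : Integrable b P0)
    (X : ℕ → Ω → 𝔜)
    (hXmeas : ∀ i, Measurable (X i))
    (hindep : iIndepFun X μ)
    (hlaw : ∀ i, Measure.map (X i) μ = P0)
    (ψ : ℝ → ℝ) (hψ : ∀ lam, ψ lam = ∫ y, Real.log (1 + lam / b y) ∂a)
    (f : ℕ → Ω → ℝ → ℝ)
    (hf : ∀ n ω lam, f n ω lam =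
      lam ^ (n - 1) * Real.exp (-ψ lam) * ∏ i ∈ Finset.range n, (lam + b (X i ω))⁻¹)
    (d : ℝ) (hd : 0 < d)
    (c : ℝ) (hc : 0 < c) (hc' : c < blow / ((a Set.univ).toReal + 1 + d)) :
    ∀ᵐ ω ∂μ, Tendsto
      (fun n : ℕ => (n : ℝ) ^ d *
        (∫ lam in Set.Ioc (0 : ℝ) (c * n / Real.log n), f n ω lam) /
        (∫ lam in Set.Ioi (0 : ℝ), f n ω lam))
      atTop (nhds 0) := by
  have hb0 : ∀ y, 0 ≤ b y := fun y => hblow.le.trans (hb y)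
  have hκ : d + 1 + a.real univ < blow / c := by
    have hpos : 0 < a.real univ + 1 + d := by positivity
    rw [lt_div_iff₀ hc]
    rw [← measureReal_def, lt_div_iff₀ hpos] at hc'
    linarith
  filter_upwards [ae_tendsto_sum_range_comp_div hXmeas hindep hlaw hbmeas hbint] with ω hω
  have hfω : ∀ n, f n ω = mixingDensity ψ (fun i => b (X i ω)) n := fun n => funext (hf n ω)
  simp only [hfω]
  exact tendsto_rpow_mul_setIntegral_mixingDensity_div hblow (fun i => hb _)
    (fun lam hlam => hψ lam ▸ integral_log_one_add_div_nonneg a hb0 hlam.le) measureReal_nonneg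
    (fun lam hlam => hψ lam ▸ integral_log_one_add_div_le a hblow hb hlam.le)
    (hω.eventually (eventually_le_nhds (lt_add_one _))) hc hκ

/-- Concentration of the posterior mixing distribution. With
`ψ(λ) = ∫ log(1 + λ/b) da` and unnormalized posterior mixing density
`f_n(λ) = λ^{n-1} e^{-ψ(λ)} Π_{i=1}^n (λ + b(X_i))⁻¹` based on an i.i.d. sample
`X_1, X_2, …` from `P_0`, for every `d > 0` and `0 < c < b̲/(a(𝔜)+1+d)`, almost surely
`n^d · Π(Λ < c n/log n | X^{(n)}) → 0`. -/
theorem mixing_distribution_concentration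
    {𝔜 : Type*} [MeasurableSpace 𝔜]
    (a : Measure 𝔜) [IsFiniteMeasure a] (ha : a ≠ 0)
    (blow : ℝ) (hblow : 0 < blow)
    (b : 𝔜 → ℝ) (hbmeas : Measurable b) (hb : ∀ y, blow ≤ b y)
    {Ω : Type*} [MeasurableSpace Ω] (μ : Measure Ω) [IsProbabilityMeasure μ]
    (P0 : Measure 𝔜) [IsProbabilityMeasure P0]
    (hbint : Integrable b P0)
    (X : ℕ → Ω → 𝔜)
    (hXmeas : ∀ i, Measurable (X i))
    (hindep : iIndepFun X μ)
    (hlaw : ∀ i, Measure.map (X i) μ = P0)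
    (ψ : ℝ → ℝ) (hψ : ∀ lam, ψ lam = ∫ y, Real.log (1 + lam / b y) ∂a)
    (f : ℕ → Ω → ℝ → ℝ)
    (hf : ∀ n ω lam, f n ω lam =
      lam ^ (n - 1) * Real.exp (-ψ lam) * ∏ i ∈ Finset.range n, (lam + b (X i ω))⁻¹)
    (d : ℝ) (hd : 0 < d)
    (c : ℝ) (hc : 0 < c) (hc' : c < blow / ((a Set.univ).toReal + 1 + d)) :
    ∀ᵐ ω ∂μ, Tendsto
      (fun n : ℕ => (n : ℝ) ^ d *
        (∫ lam in Set.Ioc (0 : ℝ) (c * n / Real.log n), f n ω lam) /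
        (∫ lam in Set.Ioi (0 : ℝ), f n ω lam))
      atTop (nhds 0) :=
  mixing_distribution_concentration_general a blow hblow b hbmeas hb μ P0 hbint X hXmeas hindep hlaw
    ψ hψ f hf d hd c hc hc'
end
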